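/- Let φ : [0,∞) → ℂ be locally integrable, δ > 0, and define Φ(δ, ν) = (1/δ)·∫_ν^{ν+δ} φ(u) du. Suppose there is a modulus of continuity w such that for all δ₁ > 0, (1/δ₁)·∫_0^{δ₁} |φ(t)| dt ≤ w(δ₁) and for all γ, δ₁ > 0, (1/δ₁)·∫_0^{δ₁} |φ(t) − φ(t+γ)| dt ≤ w(γ). Then |Φ(δ₁, δ₂)| ≤ w(δ₁) + w(δ₂) for all δ₁, δ₂ > 0. -/

import Mathlib

namespace MeasureTheory.LocallyIntegrable

variable {E : Type*} [NormedAddCommGroup E] [NormedSpace ℝ E] {φ : ℝ → E}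

theorem integral_shift_eq_sub (hφ : LocallyIntegrable φ) (δ ν : ℝ) :
    ∫ u in ν..ν + δ, φ u =
      (∫ t in (0 : ℝ)..δ, φ t) - ∫ t in (0 : ℝ)..δ, (φ t - φ (t + ν)) := by
  have hint : ∀ a b : ℝ, IntervalIntegrable φ volume a b := fun a b =>
    (hφ.integrableOn_isCompact isCompact_uIcc).intervalIntegrable
  have hshift : IntervalIntegrable (fun t => φ (t + ν)) volume 0 δ := by
    simpa using (hint ν (ν + δ)).comp_add_right ν
  rw [intervalIntegral.integral_sub (hint 0 δ) hshift, sub_sub_cancel,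
    intervalIntegral.integral_comp_add_right, zero_add, add_comm]

theorem norm_integral_shift_le (hφ : LocallyIntegrable φ) {δ : ℝ} (hδ : 0 ≤ δ) (ν : ℝ) :
    ‖∫ u in ν..ν + δ, φ u‖ ≤
      (∫ t in (0 : ℝ)..δ, ‖φ t‖) + ∫ t in (0 : ℝ)..δ, ‖φ t - φ (t + ν)‖ := by
  rw [hφ.integral_shift_eq_sub]
  exact (norm_sub_le _ _).trans <| add_le_add
    (intervalIntegral.norm_integral_le_integral_norm hδ)
    (intervalIntegral.norm_integral_le_integral_norm hδ)

end MeasureTheory.LocallyIntegrable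

theorem stmt_10_general (φ : ℝ → ℂ) (hloc : MeasureTheory.LocallyIntegrable φ)
    (w : ℝ → ℝ)
    (h1 : ∀ δ : ℝ, 0 < δ → (1 / δ) * ∫ t in (0 : ℝ)..δ, ‖φ t‖ ≤ w δ)
    (h2 : ∀ γ δ : ℝ, 0 < γ → 0 < δ →
      (1 / δ) * ∫ t in (0 : ℝ)..δ, ‖φ t - φ (t + γ)‖ ≤ w γ) :
    ∀ δ₁ δ₂ : ℝ, 0 < δ₁ → 0 < δ₂ →
      ‖(1 / δ₁ : ℝ) • ∫ u in δ₂..(δ₂ + δ₁), φ u‖ ≤ w δ₁ + w δ₂ := by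
  intro δ₁ δ₂ hδ₁ hδ₂
  have hinv : (0 : ℝ) ≤ 1 / δ₁ := by positivity
  calc ‖(1 / δ₁ : ℝ) • ∫ u in δ₂..(δ₂ + δ₁), φ u‖
      = (1 / δ₁) * ‖∫ u in δ₂..(δ₂ + δ₁), φ u‖ := by rw [norm_smul, Real.norm_of_nonneg hinv]
    _ ≤ (1 / δ₁) * ((∫ t in (0 : ℝ)..δ₁, ‖φ t‖) + ∫ t in (0 : ℝ)..δ₁, ‖φ t - φ (t + δ₂)‖) :=
        mul_le_mul_of_nonneg_left (hloc.norm_integral_shift_le hδ₁.le δ₂) hinv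
    _ ≤ w δ₁ + w δ₂ := by
        rw [mul_add]
        exact add_le_add (h1 δ₁ hδ₁) (h2 δ₂ δ₁ hδ₂ hδ₁)

/-- Lemma (7): if (1/δ)∫_0^δ |φ| ≤ w(δ) and (1/δ)∫_0^δ |φ(t) − φ(t+γ)| dt ≤ w(γ),
then |Φ(δ₁,δ₂)| ≤ w(δ₁) + w(δ₂), where Φ(δ,ν) = (1/δ)∫_ν^{ν+δ} φ. -/
theorem stmt_10 (φ : ℝ → ℂ) (hloc : MeasureTheory.LocallyIntegrable φ)
    (w : ℝ → ℝ) (hw0 : w 0 = 0)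
    (hmono : ∀ x y : ℝ, 0 ≤ x → x ≤ y → w x ≤ w y)
    (hcont : ContinuousOn w (Set.Ici 0))
    (hsub : ∀ x y : ℝ, 0 ≤ x → 0 ≤ y → w (x + y) ≤ w x + w y)
    (h1 : ∀ δ : ℝ, 0 < δ → (1 / δ) * ∫ t in (0 : ℝ)..δ, ‖φ t‖ ≤ w δ)
    (h2 : ∀ γ δ : ℝ, 0 < γ → 0 < δ →
      (1 / δ) * ∫ t in (0 : ℝ)..δ, ‖φ t - φ (t + γ)‖ ≤ w γ) :
    ∀ δ₁ δ₂ : ℝ, 0 < δ₁ → 0 < δ₂ →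
      ‖(1 / δ₁ : ℝ) • ∫ u in δ₂..(δ₂ + δ₁), φ u‖ ≤ w δ₁ + w δ₂ :=
  stmt_10_general φ hloc w h1 h2
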